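/- arXiv:1510.03180 — 4 statements merged into one kernel-verified Lean document; each statement's English description precedes it below -/
import Mathlib

section
/- For every positive natural number n, the sum over l from 1 to n-1 of l·sin(lπ/(2n)), plus n/2, equals 1/(4·sin²(π/(4n))). -/
/-!
With `g l = l sin((l-1)θ) - (l-1) sin(lθ)` the addition formulas give
`(2 - 2 cos θ) · l sin(lθ) = g (l+1) - g l`, so the sum telescopes to `g n`. At `θ = π/(2n)`
one has `sin(nθ) = 1` and `sin((n-1)θ) = cos θ`, and `2 - 2 cos θ = 4 sin²(π/(4n))`; the term `n/2`
then cancels the `n`-dependent part of `g n`.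
-/

open Finset Real

theorem two_sub_two_cos_mul_sum_range_mul_sin (θ : ℝ) (N : ℕ) :
    (2 - 2 * cos θ) * ∑ l ∈ range N, (l : ℝ) * sin (l * θ)
      = N * sin ((N - 1) * θ) - (N - 1) * sin (N * θ) := by
  induction N with
  | zero => simp
  | succ N ih =>
    have hsucc : sin ((N + 1) * θ) = sin (N * θ) * cos θ + cos (N * θ) * sin θ := by
      rw [add_one_mul, sin_add]
    have hpred : sin ((N - 1) * θ) = sin (N * θ) * cos θ - cos (N * θ) * sin θ := by
      rw [sub_one_mul, sin_sub]
    rw [sum_range_succ, mul_add, ih]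
    push_cast
    simp only [add_sub_cancel_right, hsucc, hpred]
    ring

theorem sum_Icc_one_sub_one_eq_sum_range {M : Type*} [AddCommMonoid M] {f : ℕ → M}
    (hf : f 0 = 0) (n : ℕ) : ∑ l ∈ Icc 1 (n - 1), f l = ∑ l ∈ range n, f l := by
  cases n with
  | zero => simp
  | succ n =>
    rw [add_tsub_cancel_right, ← Ico_add_one_right_eq_Icc, range_eq_Ico,
      sum_eq_sum_Ico_succ_bot n.add_one_pos, hf, zero_add, zero_add]

theorem two_sub_two_cos_mul_sum_range_mul_sin_pi_div (n : ℕ) (hn : n ≠ 0) :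
    (2 - 2 * cos (π / (2 * n))) * ∑ l ∈ range n, (l : ℝ) * sin (l * (π / (2 * n)))
      = 1 - n * (1 - cos (π / (2 * n))) := by
  have hquarter : (n : ℝ) * (π / (2 * n)) = π / 2 := by field_simp
  rw [two_sub_two_cos_mul_sum_range_mul_sin, sub_one_mul, hquarter, sin_pi_div_two,
    sin_pi_div_two_sub]
  ring

theorem buergi_eigenvalue_general (n : ℕ) :
    (∑ l ∈ Finset.Icc 1 (n - 1), (l : ℝ) * Real.sin ((l : ℝ) * Real.pi / (2 * n)))
      + (n : ℝ) / 2
    = 1 / (4 * (Real.sin (Real.pi / (4 * n))) ^ 2) := by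
  rcases eq_or_ne n 0 with rfl | hn
  · simp -- both sides are `0`, since `π / 0 = 0`
  have hangle : π / (2 * n) = 2 * (π / (4 * n)) := by field_simp; ring
  have hsin : sin (π / (4 * n)) ≠ 0 := by
    have h4n : (1 : ℝ) < 4 * n := by
      have : (1 : ℝ) ≤ n := by exact_mod_cast Nat.one_le_iff_ne_zero.mpr hn
      linarith
    exact (sin_pos_of_pos_of_lt_pi (by positivity) (div_lt_self pi_pos h4n)).ne'
  have hcos : 4 * sin (π / (4 * n)) ^ 2 = 2 - 2 * cos (π / (2 * n)) := by
    rw [sin_sq_eq_half_sub, ← hangle]; ring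
  simp_rw [mul_div_assoc]
  rw [sum_Icc_one_sub_one_eq_sum_range (by simp),
    eq_div_iff (mul_ne_zero four_ne_zero (pow_ne_zero 2 hsin)), hcos]
  linear_combination two_sub_two_cos_mul_sum_range_mul_sin_pi_div n hn

/-- The Perron–Frobenius eigenvalue of Bürgi's matrix:
`∑_{l=1}^{n-1} l·sin(lπ/(2n)) + n/2 = csc²(π/(4n))/4`. -/
theorem buergi_eigenvalue (n : ℕ) (hn : 0 < n) :
    (∑ l ∈ Finset.Icc 1 (n - 1), (l : ℝ) * Real.sin ((l : ℝ) * Real.pi / (2 * n)))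
      + (n : ℝ) / 2
    = 1 / (4 * (Real.sin (Real.pi / (4 * n))) ^ 2) :=
  buergi_eigenvalue_general n
end

section
/- Let n be a positive natural number and set μ = (sum over l from 1 to n-1 of l·sin(lπ/(2n))) + n/2. Then for every natural number j with 1 ≤ j ≤ n-1, μ·sin(jπ/(2n)) = (sum over l from 1 to j-1 of l·sin(lπ/(2n))) + (sum over l from j to n-1 of j·sin(lπ/(2n))) + j/2. -/
/-!
Put `θ = π/(2n)` and `s_l = sin(lθ)`. Summing the product-to-sum identity
`s_{l-1} + s_{l+1} = 2 cos θ · s_l` telescopes twice and shows that the right-hand side `R_j`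
of the equation satisfies `(2 - 2 cos θ) R_j = s_j` for `j ≤ n`; the boundary values `s_n = 1`
and `s_{n-1} = cos θ` kill the term linear in `j`. Since `μ = R_n`, this gives
`(2 - 2 cos θ) μ = 1`, and then `μ s_j = μ (2 - 2 cos θ) R_j = R_j`.
-/

open Finset Real

section SineSums

variable (θ : ℝ)

theorem two_sub_two_cos_mul_sum_range_sin (b : ℕ) :
    (2 - 2 * cos θ) * ∑ l ∈ range b, sin (l * θ) = sin θ + sin (b * θ - θ) - sin (b * θ) := by
  induction b with
  | zero => simp
  | succ b ih =>
    rw [sum_range_succ, mul_add, ih]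
    push_cast
    rw [add_mul, one_mul, add_sub_cancel_right, sin_add, sin_sub]
    ring

theorem two_sub_two_cos_mul_sum_range_sub_mul_sin (j : ℕ) :
    (2 - 2 * cos θ) * ∑ l ∈ range j, ((j : ℝ) - l) * sin (l * θ) = j * sin θ - sin (j * θ) := by
  induction j with
  | zero => simp
  | succ j ih =>
    have hsplit : ∑ l ∈ range (j + 1), ((↑(j + 1) : ℝ) - l) * sin (l * θ)
        = ∑ l ∈ range j, ((j : ℝ) - l) * sin (l * θ) + ∑ l ∈ range (j + 1), sin (l * θ) := by
      rw [sum_range_succ, sum_range_succ (fun l : ℕ => sin (l * θ)), ← add_assoc,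
        ← sum_add_distrib]
      push_cast
      congr 1
      · exact sum_congr rfl fun l _ => by ring
      · ring
    rw [hsplit, mul_add, ih, two_sub_two_cos_mul_sum_range_sin]
    push_cast
    rw [add_mul, one_mul, add_sub_cancel_right]
    ring

end SineSums

/-- The `j`-th coordinate of `M v` for Bürgi's matrix `M` and `v_l = sin (l θ)`. -/
noncomputable def buergiRow (θ : ℝ) (n j : ℕ) : ℝ :=
  ∑ l ∈ Icc 1 (j - 1), (l : ℝ) * sin (l * θ) + ∑ l ∈ Icc j (n - 1), (j : ℝ) * sin (l * θ) + j / 2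

theorem buergiRow_eq (θ : ℝ) {n j : ℕ} (hjn : j ≤ n) :
    buergiRow θ n j
      = j * ∑ l ∈ range n, sin (l * θ) + j / 2 - ∑ l ∈ range j, ((j : ℝ) - l) * sin (l * θ) := by
  obtain _ | k := j
  · simp [buergiRow]
  obtain ⟨m, rfl⟩ : ∃ m, n = m + 1 := ⟨n - 1, by omega⟩
  have hweighted : ∑ l ∈ Icc 1 k, (l : ℝ) * sin (l * θ)
      = ∑ l ∈ range (k + 1), (l : ℝ) * sin (l * θ) := by
    rw [sum_range_eq_add_Ico _ (by omega : 0 < k + 1), Ico_add_one_right_eq_Icc]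
    simp
  have htail : ∑ l ∈ Icc (k + 1) m, sin (l * θ)
      = ∑ l ∈ range (m + 1), sin (l * θ) - ∑ l ∈ range (k + 1), sin (l * θ) := by
    rw [← Ico_add_one_right_eq_Icc, sum_Ico_eq_sub _ hjn]
  simp only [buergiRow, Nat.add_sub_cancel, ← mul_sum, hweighted, htail, sub_mul, sum_sub_distrib]
  ring

theorem two_sub_two_cos_mul_buergiRow {θ : ℝ} {n j : ℕ} (hθ : n * θ = π / 2) (hjn : j ≤ n) :
    (2 - 2 * cos θ) * buergiRow θ n j = sin (j * θ) := by
  have htotal := two_sub_two_cos_mul_sum_range_sin θ n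
  rw [hθ, sin_pi_div_two, sin_pi_div_two_sub] at htotal
  rw [buergiRow_eq θ hjn]
  linear_combination (j : ℝ) * htotal - two_sub_two_cos_mul_sum_range_sub_mul_sin θ j

theorem buergi_eigenvector_equation_general (n : ℕ) (μ : ℝ)
    (hμ : μ = (∑ l ∈ Finset.Icc 1 (n - 1),
        (l : ℝ) * Real.sin ((l : ℝ) * Real.pi / (2 * n))) + (n : ℝ) / 2) :
    ∀ j : ℕ, 1 ≤ j → j ≤ n - 1 →
      μ * Real.sin ((j : ℝ) * Real.pi / (2 * n))
        = (∑ l ∈ Finset.Icc 1 (j - 1), (l : ℝ) * Real.sin ((l : ℝ) * Real.pi / (2 * n)))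
          + (∑ l ∈ Finset.Icc j (n - 1), (j : ℝ) * Real.sin ((l : ℝ) * Real.pi / (2 * n)))
          + (j : ℝ) / 2 := by
  intro j hj1 hjn
  have hn : (n : ℝ) ≠ 0 := by norm_cast; omega
  have hθ : n * (π / (2 * n)) = π / 2 := by field_simp
  have hμ_row : μ = buergiRow (π / (2 * n)) n n := by
    have hempty : Icc n (n - 1) = ∅ := Icc_eq_empty (by omega)
    rw [hμ, buergiRow, hempty, sum_empty, add_zero]
    simp only [mul_div_assoc]
  have hμ_inv : (2 - 2 * cos (π / (2 * n))) * μ = 1 := by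
    rw [hμ_row, two_sub_two_cos_mul_buergiRow hθ le_rfl, hθ, sin_pi_div_two]
  simp only [mul_div_assoc]
  rw [← two_sub_two_cos_mul_buergiRow hθ (by omega : j ≤ n), ← mul_assoc, mul_comm μ, hμ_inv,
    one_mul, buergiRow]

/-- The eigenvector equation for the sine vector: with
`μ = ∑_{l=1}^{n-1} l·sin(lπ/(2n)) + n/2`, for all `1 ≤ j ≤ n-1`,
`μ·sin(jπ/(2n)) = ∑_{l=1}^{j-1} l·sin(lπ/(2n)) + ∑_{l=j}^{n-1} j·sin(lπ/(2n)) + j/2`. -/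
theorem buergi_eigenvector_equation (n : ℕ) (hn : 0 < n) (μ : ℝ)
    (hμ : μ = (∑ l ∈ Finset.Icc 1 (n - 1),
        (l : ℝ) * Real.sin ((l : ℝ) * Real.pi / (2 * n))) + (n : ℝ) / 2) :
    ∀ j : ℕ, 1 ≤ j → j ≤ n - 1 →
      μ * Real.sin ((j : ℝ) * Real.pi / (2 * n))
        = (∑ l ∈ Finset.Icc 1 (j - 1), (l : ℝ) * Real.sin ((l : ℝ) * Real.pi / (2 * n)))
          + (∑ l ∈ Finset.Icc j (n - 1), (j : ℝ) * Real.sin ((l : ℝ) * Real.pi / (2 * n)))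
          + (j : ℝ) / 2 :=
  buergi_eigenvector_equation_general n μ hμ
end

section
/- Let n be a positive natural number and let M be the n×n real matrix whose entry in row j and column l (1 ≤ j, l ≤ n) equals min(j,l) if l ≤ n-1 and j/2 if l = n. Let a = (a_1,...,a_n) be a vector of non-negative real numbers with a_j > 0 for at least one j. Then for every 1 ≤ j ≤ n, the ratio of the j-th entry to the n-th entry of M^k·a converges, as k → ∞, to sin(jπ/(2n)). -/
/-!
The vector `v_j = sin (j π / (2n))` is a positive eigenvector of `M`, with eigenvalue
`1 / (4 sin² (π / (4n)))`: the first differences in `j` of `(M v)_j` are sums of sines that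
telescope. Conjugating the entrywise positive matrix `M` by `diag v` and dividing by the eigenvalue
gives a positive row-stochastic matrix `W`. Each application of `W` averages with weights bounded
below by some `δ > 0`, so it shrinks the spread `max - min` of a vector by the factor `1 - 2δ`;
hence `W^k x` tends to a constant vector, which is positive when `x ≥ 0, x ≠ 0`. Thus `M^k a` is
asymptotically proportional to `v`.
-/

open Filter Finset Topology Matrix

section Averaging

variable {ι : Type*} [Fintype ι]

theorem sum_mul_le_sub_mul_sub {w b : ι → ℝ} {δ S : ℝ} (hδ : 0 ≤ δ)
    (hw : ∀ i, δ ≤ w i) (hw1 : ∑ i, w i = 1) (hb : ∀ i, b i ≤ S) (i₀ : ι) :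
    ∑ i, w i * b i ≤ S - δ * (S - b i₀) := by
  have hterm : δ * (S - b i₀) ≤ w i₀ * (S - b i₀) :=
    mul_le_mul_of_nonneg_right (hw i₀) (sub_nonneg.2 (hb i₀))
  have hsingle : w i₀ * (S - b i₀) ≤ ∑ i, w i * (S - b i) :=
    single_le_sum (fun i _ => mul_nonneg (hδ.trans (hw i)) (sub_nonneg.2 (hb i))) (mem_univ i₀)
  have hsum : ∑ i, w i * (S - b i) = S - ∑ i, w i * b i := by
    simp only [mul_sub, sum_sub_distrib, ← sum_mul, hw1, one_mul]
  linarith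

theorem add_mul_sub_le_sum_mul {w b : ι → ℝ} {δ m : ℝ} (hδ : 0 ≤ δ)
    (hw : ∀ i, δ ≤ w i) (hw1 : ∑ i, w i = 1) (hb : ∀ i, m ≤ b i) (i₀ : ι) :
    m + δ * (b i₀ - m) ≤ ∑ i, w i * b i := by
  have := sum_mul_le_sub_mul_sub (b := -b) (S := -m) hδ hw hw1 (fun i => neg_le_neg (hb i)) i₀
  simp only [Pi.neg_apply, mul_neg, sum_neg_distrib] at this
  linarith

end Averaging

theorem exists_tendsto_of_gap_contracts {lo hi : ℕ → ℝ} {δ : ℝ} (hδ : 0 < δ)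
    (hle : ∀ k, lo k ≤ hi k) (hlo : ∀ k, lo k + δ * (hi k - lo k) ≤ lo (k + 1))
    (hhi : ∀ k, hi (k + 1) ≤ hi k - δ * (hi k - lo k)) :
    ∃ L, (∀ k, lo k ≤ L) ∧ Tendsto lo atTop (𝓝 L) ∧ Tendsto hi atTop (𝓝 L) := by
  have hgap : ∀ k, 0 ≤ hi k - lo k := fun k => sub_nonneg.2 (hle k)
  set c := max (1 - 2 * δ) 0
  have hc1 : c < 1 := max_lt (by linarith) one_pos
  have hgap_le : ∀ k, hi k - lo k ≤ c ^ k * (hi 0 - lo 0) := fun k =>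
    le_geom (u := fun k => hi k - lo k) (le_max_right _ _) k fun k _ =>
      calc hi (k + 1) - lo (k + 1) ≤ (1 - 2 * δ) * (hi k - lo k) := by linarith [hlo k, hhi k]
        _ ≤ c * (hi k - lo k) := mul_le_mul_of_nonneg_right (le_max_left _ _) (hgap k)
  have hgap_lim : Tendsto (fun k => hi k - lo k) atTop (𝓝 0) := by
    have hpow := (tendsto_pow_atTop_nhds_zero_of_lt_one (le_max_right _ _) hc1).mul_const
      (hi 0 - lo 0)
    rw [zero_mul] at hpow
    exact tendsto_of_tendsto_of_tendsto_of_le_of_le tendsto_const_nhds hpow hgap hgap_le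
  have hlo_mono : Monotone lo :=
    monotone_nat_of_le_succ fun k =>
      (le_add_of_nonneg_right (mul_nonneg hδ.le (hgap k))).trans (hlo k)
  have hhi_anti : Antitone hi :=
    antitone_nat_of_succ_le fun k => (hhi k).trans (sub_le_self _ (mul_nonneg hδ.le (hgap k)))
  have hbdd : BddAbove (Set.range lo) :=
    ⟨hi 0, Set.forall_mem_range.2 fun k => (hle k).trans (hhi_anti (Nat.zero_le k))⟩
  have hlo_lim := tendsto_atTop_ciSup hlo_mono hbdd
  refine ⟨⨆ k, lo k, le_ciSup hbdd, hlo_lim, ?_⟩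
  simpa using hlo_lim.add hgap_lim

theorem exists_tendsto_of_stochastic {ι : Type*} [Fintype ι] [Nonempty ι] {W : Matrix ι ι ℝ}
    (hW : ∀ i j, 0 < W i j) (hW1 : ∀ i, ∑ j, W i j = 1) {r : ℕ → ι → ℝ}
    (hr : ∀ k, r (k + 1) = W *ᵥ r k) :
    ∃ L, (∀ k, ⨅ i, r k i ≤ L) ∧ ∀ i, Tendsto (fun k => r k i) atTop (𝓝 L) := by
  set δ := ⨅ p : ι × ι, W p.1 p.2
  have hδ : 0 < δ := by
    obtain ⟨p, hp⟩ := exists_eq_ciInf_of_finite (f := fun p : ι × ι => W p.1 p.2)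
    exact (hW p.1 p.2).trans_eq hp
  have hδW : ∀ i j, δ ≤ W i j := fun i j => ciInf_le (Finite.bddBelow_range _) (i, j)
  have hinf_le : ∀ k i, ⨅ j, r k j ≤ r k i := fun k => ciInf_le (Finite.bddBelow_range _)
  have hle_sup : ∀ k i, r k i ≤ ⨆ j, r k j := fun k => le_ciSup (Finite.bddAbove_range _)
  obtain ⟨L, hL, hlo, hhi⟩ := exists_tendsto_of_gap_contracts hδ
    (fun k => (hinf_le k (Classical.arbitrary ι)).trans (hle_sup k _))
    (fun k => le_ciInf fun i => by
      obtain ⟨i₀, hi₀⟩ := exists_eq_ciSup_of_finite (f := r k)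
      rw [hr, ← hi₀]
      exact add_mul_sub_le_sum_mul hδ.le (hδW i) (hW1 i) (hinf_le k) i₀)
    (fun k => ciSup_le fun i => by
      obtain ⟨i₀, hi₀⟩ := exists_eq_ciInf_of_finite (f := r k)
      rw [hr, ← hi₀]
      exact sum_mul_le_sub_mul_sub hδ.le (hδW i) (hW1 i) (hle_sup k) i₀)
  exact ⟨L, hL, fun i =>
    tendsto_of_tendsto_of_tendsto_of_le_of_le hlo hhi (fun k => hinf_le k i)
      (fun k => hle_sup k i)⟩

theorem tendsto_mulVec_pow_div_of_pos_eigenvector {ι : Type*} [Fintype ι] [DecidableEq ι]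
    {A : Matrix ι ι ℝ} (hA : ∀ i j, 0 < A i j) {v : ι → ℝ} (hv : ∀ i, 0 < v i)
    {μ : ℝ} (hAv : A *ᵥ v = μ • v) {a : ι → ℝ} (ha : ∀ i, 0 ≤ a i)
    (ha' : ∃ i, 0 < a i) (i j : ι) :
    Tendsto (fun k : ℕ => (A ^ k *ᵥ a) i / (A ^ k *ᵥ a) j) atTop (𝓝 (v i / v j)) := by
  have : Nonempty ι := ⟨i⟩
  have hAv_apply : ∀ i, ∑ l, A i l * v l = μ * v i := fun i => congrFun hAv i
  have hμ : 0 < μ := by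
    have hsum : 0 < ∑ l, A i l * v l :=
      sum_pos (fun l _ => mul_pos (hA i l) (hv l)) univ_nonempty
    exact pos_of_mul_pos_left ((hAv_apply i).symm ▸ hsum) (hv i).le
  -- `W` is `A` conjugated by `diag v` and rescaled by `μ⁻¹`, hence row-stochastic.
  set W : Matrix ι ι ℝ := .of fun i l => A i l * v l / (μ * v i)
  have hW : ∀ i l, 0 < W i l := fun i l => by
    have := hA i l; have := hv i; have := hv l; simp only [W, of_apply]; positivity
  have hW1 : ∀ i, ∑ l, W i l = 1 := fun i => by
    simp only [W, of_apply, ← sum_div, hAv_apply]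
    exact div_self (mul_pos hμ (hv i)).ne'
  set x : ℕ → ι → ℝ := fun k : ℕ => A ^ k *ᵥ a
  set r : ℕ → ι → ℝ := fun k i => x k i / (μ ^ k * v i)
  have hr : ∀ k, r (k + 1) = W *ᵥ r k := fun k => funext fun i => by
    have hx : x (k + 1) = A *ᵥ x k := by simp only [x, pow_succ', mulVec_mulVec]
    have hterm : ∀ l, W i l * r k l = A i l * x k l / (μ ^ (k + 1) * v i) := fun l => by
      have := (hv l).ne'; have := (hv i).ne'; have := hμ.ne'
      simp only [W, r, of_apply]; field_simp; ring
    change x (k + 1) i / _ = ∑ l, W i l * r k l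
    rw [sum_congr rfl fun l _ => hterm l, ← sum_div, hx]
    rfl
  obtain ⟨L, hL, hrL⟩ := exists_tendsto_of_stochastic hW hW1 hr
  have hL_pos : 0 < L := by
    obtain ⟨i₀, hi₀⟩ := exists_eq_ciInf_of_finite (f := r 1)
    obtain ⟨l₀, hl₀⟩ := ha'
    have hx1 : 0 < x 1 i₀ := by
      simp only [x, pow_one]
      exact sum_pos' (fun l _ => mul_nonneg (hA i₀ l).le (ha l))
        ⟨l₀, mem_univ _, mul_pos (hA i₀ l₀) hl₀⟩
    have : 0 < r 1 i₀ := div_pos hx1 (mul_pos (pow_pos hμ 1) (hv i₀))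
    linarith [hL 1]
  have hratio : ∀ k, x k i / x k j = r k i * v i / (r k j * v j) := fun k => by
    simp only [r, div_mul_eq_mul_div, mul_div_mul_right _ _ (hv i).ne',
      mul_div_mul_right _ _ (hv j).ne']
    rw [div_div_div_cancel_right₀ (pow_pos hμ k).ne']
  have hlim := ((hrL i).mul_const (v i)).div ((hrL j).mul_const (v j)) (mul_pos hL_pos (hv j)).ne'
  rw [mul_div_mul_left _ _ hL_pos.ne'] at hlim
  exact hlim.congr fun k => (hratio k).symm

open Real

theorem two_mul_sin_half_mul_sum_Ico_sin (θ : ℝ) {p m : ℕ} (h : p ≤ m) :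
    2 * sin (θ / 2) * ∑ l ∈ Ico p m, sin ((l + 1 : ℕ) * θ) =
      cos (p * θ + θ / 2) - cos (m * θ + θ / 2) := by
  have hterm : ∀ l : ℕ, 2 * sin (θ / 2) * sin ((l + 1 : ℕ) * θ) =
      -cos ((l + 1 : ℕ) * θ + θ / 2) - -cos (l * θ + θ / 2) := fun l => by
    rw [two_mul_sin_mul_sin, ← cos_neg (θ / 2 - _)]
    push_cast
    ring_nf
  rw [mul_sum, sum_congr rfl fun l _ => hterm l,
    sum_Ico_sub (fun l : ℕ => -cos (l * θ + θ / 2)) h]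
  ring

noncomputable def buergiAngle (n : ℕ) : ℝ := π / (2 * n)

-- Rows and columns are numbered from `1`, as in the paper.
noncomputable def buergiEntry (n p q : ℕ) : ℝ := if q < n then min (p : ℝ) q else p / 2

section

variable {n : ℕ}

theorem natCast_mul_buergiAngle (hn : 0 < n) : n * buergiAngle n = π / 2 := by
  have : (n : ℝ) ≠ 0 := by positivity
  rw [buergiAngle]; field_simp

theorem buergiAngle_pos (hn : 0 < n) : 0 < buergiAngle n := by
  unfold buergiAngle; positivity

theorem sin_half_buergiAngle_pos (hn : 0 < n) : 0 < sin (buergiAngle n / 2) := by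
  have hθ := buergiAngle_pos hn
  have hn' : (1 : ℝ) ≤ n := by exact_mod_cast hn
  apply sin_pos_of_pos_of_lt_pi (by positivity)
  nlinarith [natCast_mul_buergiAngle hn, pi_pos]

theorem buergiEntry_pos {p q : ℕ} (hp : 0 < p) (hq : 0 < q) : 0 < buergiEntry n p q := by
  unfold buergiEntry
  split_ifs <;> positivity

theorem buergiEntry_succ_sub (p q : ℕ) :
    buergiEntry n (p + 1) q - buergiEntry n p q =
      if q < n then (if p < q then 1 else 0) else 1 / 2 := by
  unfold buergiEntry
  split_ifs with hq hpq <;> push_cast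
  · rw [min_eq_left (by exact_mod_cast hpq), min_eq_left (by exact_mod_cast hpq.le)]; ring
  · rw [min_eq_right (by exact_mod_cast (by omega : q ≤ p + 1)),
      min_eq_right (by exact_mod_cast (not_lt.1 hpq))]; ring
  · ring

theorem two_mul_sin_half_mul_sum_buergiEntry_succ_sub (hn : 0 < n) {p : ℕ} (hp : p < n) :
    2 * sin (buergiAngle n / 2) * ∑ l ∈ range n,
      (buergiEntry n (p + 1) (l + 1) - buergiEntry n p (l + 1)) *
        sin ((l + 1 : ℕ) * buergiAngle n) =
      cos (p * buergiAngle n + buergiAngle n / 2) := by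
  set θ := buergiAngle n
  obtain ⟨m, rfl⟩ : ∃ m, n = m + 1 := ⟨n - 1, by omega⟩
  have hlast : sin ((m + 1 : ℕ) * θ) = 1 := by rw [natCast_mul_buergiAngle hn, sin_pi_div_two]
  have hcos : cos (m * θ + θ / 2) = sin (θ / 2) := by
    have : (m : ℝ) * θ + θ / 2 = π / 2 - θ / 2 := by
      rw [← natCast_mul_buergiAngle hn]; push_cast; ring
    rw [this, cos_pi_div_two_sub]
  have hsplit : ∑ l ∈ range m,
      (if l + 1 < m + 1 then (if p < l + 1 then (1 : ℝ) else 0) else 1 / 2) *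
      sin ((l + 1 : ℕ) * θ) = ∑ l ∈ Ico p m, sin ((l + 1 : ℕ) * θ) := by
    rw [← sum_range_add_sum_Ico _ (by omega : p ≤ m), sum_eq_zero fun l hl => ?_, zero_add]
    · refine sum_congr rfl fun l hl => ?_
      rw [mem_Ico] at hl
      rw [if_pos (by omega), if_pos (by omega), one_mul]
    · rw [mem_range] at hl
      rw [if_pos (by omega), if_neg (by omega), zero_mul]
  simp only [buergiEntry_succ_sub]
  rw [sum_range_succ, if_neg (lt_irrefl _), hlast, hsplit, mul_add,
    two_mul_sin_half_mul_sum_Ico_sin θ (by omega : p ≤ m), hcos]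
  ring

theorem four_mul_sin_sq_mul_sum_buergiEntry (hn : 0 < n) {p : ℕ} (hp : p ≤ n) :
    4 * sin (buergiAngle n / 2) ^ 2 *
      ∑ l ∈ range n, buergiEntry n p (l + 1) * sin ((l + 1 : ℕ) * buergiAngle n) =
      sin (p * buergiAngle n) := by
  set θ := buergiAngle n
  induction p with
  | zero => simp [buergiEntry, add_nonneg]
  | succ p ih =>
    have hdiff := two_mul_sin_half_mul_sum_buergiEntry_succ_sub hn (p := p) (by omega)
    simp only [sub_mul, sum_sub_distrib] at hdiff
    have hsin : sin ((p + 1 : ℕ) * θ) - sin (p * θ) =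
        2 * sin (θ / 2) * cos (p * θ + θ / 2) := by
      rw [two_mul_sin_mul_cos, show θ / 2 - (p * θ + θ / 2) = -(p * θ) by ring, sin_neg,
        show θ / 2 + (p * θ + θ / 2) = (p + 1 : ℕ) * θ by push_cast; ring]
      ring
    linear_combination (2 * sin (θ / 2)) * hdiff + ih (by omega) - hsin

noncomputable def buergiMatrix (n : ℕ) : Matrix (Fin n) (Fin n) ℝ :=
  .of fun j l => buergiEntry n (j + 1) (l + 1)

noncomputable def buergiEigenvector (n : ℕ) : Fin n → ℝ :=
  fun l => sin ((l + 1 : ℕ) * buergiAngle n)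

theorem buergiMatrix_pos (j l : Fin n) : 0 < buergiMatrix n j l :=
  buergiEntry_pos j.succ_pos l.succ_pos

theorem buergiEigenvector_pos (hn : 0 < n) (l : Fin n) : 0 < buergiEigenvector n l := by
  have hθ := buergiAngle_pos hn
  have hl : ((l + 1 : ℕ) : ℝ) ≤ n := by exact_mod_cast l.isLt
  apply sin_pos_of_pos_of_lt_pi (by positivity)
  nlinarith [natCast_mul_buergiAngle hn, pi_pos]

theorem buergiEigenvector_eq_one {l : Fin n} (hl : (l : ℕ) = n - 1) :
    buergiEigenvector n l = 1 := by
  rw [buergiEigenvector, hl, Nat.sub_add_cancel l.pos, natCast_mul_buergiAngle l.pos,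
    sin_pi_div_two]

theorem buergiMatrix_mulVec_buergiEigenvector (hn : 0 < n) :
    buergiMatrix n *ᵥ buergiEigenvector n =
      (4 * sin (buergiAngle n / 2) ^ 2)⁻¹ • buergiEigenvector n := by
  ext j
  have hsin := sin_half_buergiAngle_pos hn
  rw [Pi.smul_apply, smul_eq_mul, eq_inv_mul_iff_mul_eq₀ (by positivity), buergiEigenvector,
    ← four_mul_sin_sq_mul_sum_buergiEntry hn j.isLt]
  congr 1
  exact Fin.sum_univ_eq_sum_range
    (fun l => buergiEntry n (j + 1) (l + 1) * sin ((l + 1 : ℕ) * buergiAngle n)) n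

end

/-- Convergence of Bürgi's algorithm: starting from any non-negative vector
with a positive entry, the normalized iterates of `M` converge to the
sine values `sin(jπ/(2n))`. -/
theorem buergi_convergence (n : ℕ) (hn : 0 < n)
    (M : Matrix (Fin n) (Fin n) ℝ)
    (hM : ∀ j l : Fin n, M j l =
      if (l : ℕ) + 1 ≤ n - 1 then (min ((j : ℕ) + 1) ((l : ℕ) + 1) : ℝ)
      else ((j : ℕ) + 1 : ℝ) / 2)
    (a : Fin n → ℝ) (ha : ∀ j, 0 ≤ a j) (hpos : ∃ j, 0 < a j) :
    ∀ j : Fin n,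
      Tendsto (fun k : ℕ =>
          ((M ^ k).mulVec a) j / ((M ^ k).mulVec a) ⟨n - 1, by omega⟩)
        atTop
        (nhds (Real.sin ((((j : ℕ) + 1 : ℕ) : ℝ) * Real.pi / (2 * n)))) := by
  obtain rfl : M = buergiMatrix n := Matrix.ext fun j l => by
    simp [hM, buergiMatrix, buergiEntry, Nat.le_sub_one_iff_lt hn]
  intro j
  have key := tendsto_mulVec_pow_div_of_pos_eigenvector buergiMatrix_pos
    (buergiEigenvector_pos hn) (buergiMatrix_mulVec_buergiEigenvector hn) ha hpos j
    ⟨n - 1, by omega⟩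
  rwa [buergiEigenvector_eq_one (l := ⟨n - 1, by omega⟩) rfl, div_one, buergiEigenvector,
    buergiAngle, ← mul_div_assoc] at key
end

section
/- Let n ≥ 2 be a natural number, let M be the n×n real matrix whose entry in row j and column l (1 ≤ j, l ≤ n) equals min(j,l) if l ≤ n-1 and j/2 if l = n, and let N be the n×n real matrix with N_{j,j} = 2 for all j, N_{j,j+1} = N_{j+1,j} = -1 for 1 ≤ j ≤ n-2 together with N_{n-1,n} = -1 and N_{n,n-1} = -2, and all other entries 0. Then M·N = I and N·M = I, i.e., N is the inverse of M. -/
private lemma buergi_sum_two {n : ℕ} (a b : Fin n) (hab : a ≠ b) (f : Fin n → ℝ)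
    (h : ∀ l, l ≠ a → l ≠ b → f l = 0) : ∑ l, f l = f a + f b := by
  rw [← Finset.sum_pair hab]
  refine (Finset.sum_subset (Finset.subset_univ _) fun x _ hx => ?_).symm
  simp only [Finset.mem_insert, Finset.mem_singleton, not_or] at hx
  exact h x hx.1 hx.2

private lemma buergi_sum_three {n : ℕ} (a b c : Fin n) (hab : a ≠ b) (hac : a ≠ c)
    (hbc : b ≠ c) (f : Fin n → ℝ)
    (h : ∀ l, l ≠ a → l ≠ b → l ≠ c → f l = 0) : ∑ l, f l = f a + f b + f c := by
  have key : ∑ l ∈ ({a, b, c} : Finset (Fin n)), f l = f a + (f b + f c) := by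
    rw [Finset.sum_insert (by simp [hab, hac]), Finset.sum_pair hbc]
  rw [← add_assoc] at key
  rw [← key]
  refine (Finset.sum_subset (Finset.subset_univ _) fun x _ hx => ?_).symm
  simp only [Finset.mem_insert, Finset.mem_singleton, not_or] at hx
  exact h x hx.1 hx.2.1 hx.2.2

/-- The inverse of Bürgi's matrix `M` is the (boundary-normalized) negative
second-difference matrix `N`. -/
theorem buergi_matrix_inverse (n : ℕ) (hn : 2 ≤ n)
    (M N : Matrix (Fin n) (Fin n) ℝ)
    (hM : ∀ j l : Fin n, M j l =
      if (l : ℕ) + 1 ≤ n - 1 then (min ((j : ℕ) + 1) ((l : ℕ) + 1) : ℝ)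
      else ((j : ℕ) + 1 : ℝ) / 2)
    (hN : ∀ j l : Fin n, N j l =
      if (j : ℕ) = (l : ℕ) then 2
      else if (l : ℕ) = (j : ℕ) + 1 then -1
      else if (j : ℕ) = (l : ℕ) + 1 then (if (j : ℕ) = n - 1 then -2 else -1)
      else 0) :
    M * N = 1 ∧ N * M = 1 := by
  have key : N * M = 1 := by
    ext j k
    rw [Matrix.mul_apply, Matrix.one_apply]
    have hjn : (j : ℕ) < n := j.isLt
    have hkn : (k : ℕ) < n := k.isLt
    by_cases hj0 : (j : ℕ) = 0
    · -- first row: 2 M 0 k - M 1 k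
      set jp : Fin n := ⟨1, by omega⟩ with hjp
      have hjpv : (jp : ℕ) = 1 := rfl
      have hne : j ≠ jp := by simp [Fin.ext_iff, hj0, hjpv]
      rw [buergi_sum_two j jp hne _ (fun l h1 h2 => by
        have hl1 : (l : ℕ) ≠ (j : ℕ) := fun h => h1 (Fin.ext h)
        have hl2 : (l : ℕ) ≠ (jp : ℕ) := fun h => h2 (Fin.ext h)
        rw [hN, if_neg (by omega), if_neg (by omega), if_neg (by omega), zero_mul])]
      have hNjj : N j j = 2 := by rw [hN]; simp
      have hNjp : N j jp = -1 := by
        rw [hN, if_neg (by omega), if_pos (by omega)]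
      rw [hNjj, hNjp]
      by_cases hk : (k : ℕ) + 1 ≤ n - 1
      · have m1 : M j k = 1 := by
          rw [hM, if_pos hk]
          have : (((j : ℕ) : ℝ) + 1) ≤ ((k : ℕ) : ℝ) + 1 := by
            have : ((j : ℕ) : ℝ) ≤ ((k : ℕ) : ℝ) := Nat.cast_le.mpr (by omega)
            linarith
          rw [min_eq_left this, hj0]; norm_num
        by_cases hjk : j = k
        · have hkv : (k : ℕ) = 0 := by rw [← hjk]; exact hj0
          have m2 : M jp k = 1 := by
            rw [hM, if_pos hk]
            have : (((k : ℕ) : ℝ) + 1) ≤ ((jp : ℕ) : ℝ) + 1 := by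
              have : ((k : ℕ) : ℝ) ≤ ((jp : ℕ) : ℝ) := Nat.cast_le.mpr (by omega)
              linarith
            rw [min_eq_right this, hkv]; norm_num
          rw [m1, m2, if_pos hjk]; norm_num
        · have hk0 : (k : ℕ) ≠ 0 := fun h => hjk (Fin.ext (by omega))
          have m2 : M jp k = 2 := by
            rw [hM, if_pos hk]
            have : (((jp : ℕ) : ℝ) + 1) ≤ ((k : ℕ) : ℝ) + 1 := by
              have : ((jp : ℕ) : ℝ) ≤ ((k : ℕ) : ℝ) := Nat.cast_le.mpr (by omega)
              linarith
            rw [min_eq_left this, hjpv]; norm_num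
          rw [m1, m2, if_neg hjk]; norm_num
      · have hjk : j ≠ k := fun h => by
          have : (j : ℕ) = (k : ℕ) := by rw [h]
          omega
        have m1 : M j k = 1 / 2 := by rw [hM, if_neg hk, hj0]; norm_num
        have m2 : M jp k = 1 := by rw [hM, if_neg hk, hjpv]; norm_num
        rw [m1, m2, if_neg hjk]; norm_num
    · by_cases hjl : (j : ℕ) = n - 1
      · -- last row: -2 M (n-2) k + 2 M (n-1) k
        set jm : Fin n := ⟨(j : ℕ) - 1, by omega⟩ with hjm
        have hjmv : (jm : ℕ) = (j : ℕ) - 1 := rfl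
        have hjmr : ((jm : ℕ) : ℝ) + 1 = ((j : ℕ) : ℝ) := by
          have : (jm : ℕ) + 1 = (j : ℕ) := by omega
          exact_mod_cast congrArg (Nat.cast : ℕ → ℝ) this
        have hne : jm ≠ j := by
          intro h
          have : (jm : ℕ) = (j : ℕ) := by rw [h]
          omega
        rw [buergi_sum_two jm j hne _ (fun l h1 h2 => by
          have hl1 : (l : ℕ) ≠ (jm : ℕ) := fun h => h1 (Fin.ext h)
          have hl2 : (l : ℕ) ≠ (j : ℕ) := fun h => h2 (Fin.ext h)
          rw [hN, if_neg (by omega), if_neg (by omega), if_neg (by omega), zero_mul])]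
        have hNjm : N j jm = -2 := by
          rw [hN, if_neg (by omega), if_neg (by omega), if_pos (by omega), if_pos hjl]
        have hNjj : N j j = 2 := by rw [hN]; simp
        rw [hNjm, hNjj]
        by_cases hk : (k : ℕ) + 1 ≤ n - 1
        · have hjk : j ≠ k := fun h => by
            have : (j : ℕ) = (k : ℕ) := by rw [h]
            omega
          have m1 : M jm k = ((k : ℕ) : ℝ) + 1 := by
            rw [hM, if_pos hk]
            have : (((k : ℕ) : ℝ) + 1) ≤ ((jm : ℕ) : ℝ) + 1 := by
              have : ((k : ℕ) : ℝ) ≤ ((jm : ℕ) : ℝ) := Nat.cast_le.mpr (by omega)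
              linarith
            rw [min_eq_right this]
          have m2 : M j k = ((k : ℕ) : ℝ) + 1 := by
            rw [hM, if_pos hk]
            have : (((k : ℕ) : ℝ) + 1) ≤ ((j : ℕ) : ℝ) + 1 := by
              have : ((k : ℕ) : ℝ) ≤ ((j : ℕ) : ℝ) := Nat.cast_le.mpr (by omega)
              linarith
            rw [min_eq_right this]
          rw [m1, m2, if_neg hjk]; ring
        · have hjk : j = k := Fin.ext (by omega)
          have m1 : M jm k = ((j : ℕ) : ℝ) / 2 := by
            rw [hM, if_neg hk, hjmr]
          have m2 : M j k = (((j : ℕ) : ℝ) + 1) / 2 := by rw [hM, if_neg hk]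
          rw [m1, m2, if_pos hjk]; ring
      · -- interior row: -M (j-1) k + 2 M j k - M (j+1) k
        set jm : Fin n := ⟨(j : ℕ) - 1, by omega⟩ with hjm
        set jp : Fin n := ⟨(j : ℕ) + 1, by omega⟩ with hjp
        have hjmv : (jm : ℕ) = (j : ℕ) - 1 := rfl
        have hjpv : (jp : ℕ) = (j : ℕ) + 1 := rfl
        have hjmr : ((jm : ℕ) : ℝ) + 1 = ((j : ℕ) : ℝ) := by
          have : (jm : ℕ) + 1 = (j : ℕ) := by omega
          exact_mod_cast congrArg (Nat.cast : ℕ → ℝ) this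
        have hjpr : ((jp : ℕ) : ℝ) = ((j : ℕ) : ℝ) + 1 := by
          exact_mod_cast congrArg (Nat.cast : ℕ → ℝ) hjpv
        have h1 : jm ≠ j := by
          intro h
          have : (jm : ℕ) = (j : ℕ) := by rw [h]
          omega
        have h2 : jm ≠ jp := by
          intro h
          have : (jm : ℕ) = (jp : ℕ) := by rw [h]
          omega
        have h3 : j ≠ jp := by
          intro h
          have : (j : ℕ) = (jp : ℕ) := by rw [h]
          omega
        rw [buergi_sum_three jm j jp h1 h2 h3 _ (fun l e1 e2 e3 => by
          have hl1 : (l : ℕ) ≠ (jm : ℕ) := fun h => e1 (Fin.ext h)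
          have hl2 : (l : ℕ) ≠ (j : ℕ) := fun h => e2 (Fin.ext h)
          have hl3 : (l : ℕ) ≠ (jp : ℕ) := fun h => e3 (Fin.ext h)
          rw [hN, if_neg (by omega), if_neg (by omega), if_neg (by omega), zero_mul])]
        have hNjm : N j jm = -1 := by
          rw [hN, if_neg (by omega), if_neg (by omega), if_pos (by omega), if_neg hjl]
        have hNjj : N j j = 2 := by rw [hN]; simp
        have hNjp : N j jp = -1 := by
          rw [hN, if_neg (by omega), if_pos (by omega)]
        rw [hNjm, hNjj, hNjp]
        have mval : ∀ x : Fin n, (k : ℕ) + 1 ≤ n - 1 →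
            M x k = if (x : ℕ) ≤ (k : ℕ) then ((x : ℕ) : ℝ) + 1 else ((k : ℕ) : ℝ) + 1 := by
          intro x hk
          rw [hM, if_pos hk]
          by_cases hxk : (x : ℕ) ≤ (k : ℕ)
          · rw [if_pos hxk]
            refine min_eq_left ?_
            have : ((x : ℕ) : ℝ) ≤ ((k : ℕ) : ℝ) := Nat.cast_le.mpr hxk
            linarith
          · rw [if_neg hxk]
            refine min_eq_right ?_
            have : ((k : ℕ) : ℝ) ≤ ((x : ℕ) : ℝ) := Nat.cast_le.mpr (by omega)
            linarith
        by_cases hk : (k : ℕ) + 1 ≤ n - 1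
        · rw [mval jm hk, mval j hk, mval jp hk]
          rcases Nat.lt_trichotomy (j : ℕ) (k : ℕ) with h | h | h
          · have hjk : j ≠ k := fun hh => by
              have : (j : ℕ) = (k : ℕ) := by rw [hh]
              omega
            rw [if_pos (by omega : (jm : ℕ) ≤ (k : ℕ)),
              if_pos (by omega : (j : ℕ) ≤ (k : ℕ)),
              if_pos (by omega : (jp : ℕ) ≤ (k : ℕ)), if_neg hjk, hjpr]
            linarith
          · have hjk : j = k := Fin.ext h
            rw [if_pos (by omega : (jm : ℕ) ≤ (k : ℕ)),
              if_pos (by omega : (j : ℕ) ≤ (k : ℕ)),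
              if_neg (by omega : ¬ (jp : ℕ) ≤ (k : ℕ)), if_pos hjk]
            have hke : ((k : ℕ) : ℝ) = ((j : ℕ) : ℝ) := by rw [h]
            rw [hke]
            linarith
          · have hjk : j ≠ k := fun hh => by
              have : (j : ℕ) = (k : ℕ) := by rw [hh]
              omega
            have ejm : (if (jm : ℕ) ≤ (k : ℕ) then ((jm : ℕ) : ℝ) + 1
                else ((k : ℕ) : ℝ) + 1) = ((k : ℕ) : ℝ) + 1 := by
              split_ifs with hh
              · have : (jm : ℕ) = (k : ℕ) := by omega
                rw [this]
              · rfl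
            rw [ejm, if_neg (by omega : ¬ (j : ℕ) ≤ (k : ℕ)),
              if_neg (by omega : ¬ (jp : ℕ) ≤ (k : ℕ)), if_neg hjk]
            ring
        · have hjk : j ≠ k := fun hh => by
            have : (j : ℕ) = (k : ℕ) := by rw [hh]
            omega
          have m1 : M jm k = ((j : ℕ) : ℝ) / 2 := by rw [hM, if_neg hk, hjmr]
          have m2 : M j k = (((j : ℕ) : ℝ) + 1) / 2 := by rw [hM, if_neg hk]
          have m3 : M jp k = (((j : ℕ) : ℝ) + 2) / 2 := by
            rw [hM, if_neg hk, hjpr]; ring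
          rw [m1, m2, m3, if_neg hjk]; ring
  exact ⟨mul_eq_one_comm.mpr key, key⟩
end
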